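/- Let (Ω,𝔅,μ) be a σ-finite measure space and let ℱ be a subset of L¹(Ω,μ). Then ℱ is uniformly integrable if and only if ℱ is a bounded subset of L¹(Ω,μ) and there exists a convex function Φ ∈ C^∞([0,∞)) with Φ(0)=Φ'(0)=0, Φ' concave, Φ'(r)>0 for r>0, Φ(r)/r → ∞ and Φ'(r) → ∞ as r → ∞, and sup_{f∈ℱ} ∫_Ω Φ(|f|) dμ < ∞. -/

import Mathlib

open MeasureTheory Filter Topology
open scoped ENNReal NNReal

namespace DLVP

/-- building block for `Φ'`. -/
noncomputable def psiTerm (b r : ℝ) : ℝ := 1 - Real.exp (-(b * r))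

/-- building block for `Φ`. -/
noncomputable def phiTerm (b r : ℝ) : ℝ := (b * r + Real.exp (-(b * r)) - 1) / b

noncomputable def Psi (b : ℕ → ℝ) (r : ℝ) : ℝ := ∑' n, psiTerm (b n) r

noncomputable def Phi (b : ℕ → ℝ) (r : ℝ) : ℝ := ∑' n, phiTerm (b n) r

lemma one_sub_exp_neg_le (x : ℝ) : 1 - Real.exp (-x) ≤ x := by
  nlinarith [Real.add_one_le_exp (-x)]

lemma exp_mul_exp_neg (x : ℝ) : Real.exp (-x) * Real.exp x = 1 := by
  rw [← Real.exp_add]; simp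

lemma exp_sub_one_le (x : ℝ) (hx : 0 ≤ x) : Real.exp x - 1 ≤ x * Real.exp x := by
  nlinarith [mul_le_mul_of_nonneg_left (one_sub_exp_neg_le x) (Real.exp_pos x).le,
    exp_mul_exp_neg x]

lemma exp_quad_bound (x : ℝ) (hx : 0 ≤ x) : Real.exp (-x) - 1 + x ≤ x ^ 2 := by
  have h1 : (x + 1) * Real.exp (-x) ≤ 1 := by
    have := mul_le_mul_of_nonneg_right (Real.add_one_le_exp x) (Real.exp_pos (-x)).le
    calc (x + 1) * Real.exp (-x) ≤ Real.exp x * Real.exp (-x) := this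
      _ = 1 := by rw [mul_comm]; exact exp_mul_exp_neg x
  nlinarith [Real.exp_pos (-x), sq_nonneg x, mul_nonneg hx hx]

lemma exp_quad_bound' (t : ℝ) (ht : 0 ≤ t) :
    Real.exp t - 1 - t ≤ t ^ 2 * Real.exp t := by
  have h0 : (0:ℝ) ≤ (1 + t) * Real.exp t := mul_nonneg (by linarith) (Real.exp_pos t).le
  have h := mul_le_mul_of_nonneg_right (Real.add_one_le_exp (-t)) h0
  nlinarith [exp_mul_exp_neg t, Real.exp_pos t]

lemma exp_num_nonneg (x : ℝ) : 0 ≤ Real.exp (-x) - 1 + x := by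
  nlinarith [Real.add_one_le_exp (-x)]

lemma abs_psiTerm_le (x : ℝ) : |1 - Real.exp (-x)| ≤ |x| * Real.exp |x| := by
  rcases le_total 0 x with hx | hx
  · rw [abs_of_nonneg hx]
    have h1 : 1 - Real.exp (-x) ≤ x := one_sub_exp_neg_le x
    have h2 : Real.exp (-x) ≤ 1 := by
      rw [show (1:ℝ) = Real.exp 0 by simp]
      exact Real.exp_le_exp.2 (by linarith)
    have h3 : |1 - Real.exp (-x)| = 1 - Real.exp (-x) := abs_of_nonneg (by linarith)
    have h4 : (1:ℝ) ≤ Real.exp x := by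
      rw [show (1:ℝ) = Real.exp 0 by simp]; exact Real.exp_le_exp.2 hx
    calc |1 - Real.exp (-x)| = 1 - Real.exp (-x) := h3
      _ ≤ x := h1
      _ ≤ x * Real.exp x := by nlinarith
  · rw [abs_of_nonpos hx]
    set t := -x with ht
    have ht0 : 0 ≤ t := by simp [ht]; linarith
    have h1 : Real.exp t - 1 ≤ t * Real.exp t := exp_sub_one_le t ht0
    have h2 : (1:ℝ) ≤ Real.exp t := by
      rw [show (1:ℝ) = Real.exp 0 by simp]; exact Real.exp_le_exp.2 ht0
    have : |1 - Real.exp (-x)| = Real.exp t - 1 := by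
      rw [show -x = t from rfl, abs_of_nonpos (by linarith)]; ring
    rw [this]
    exact h1

lemma abs_phiNum_le (x : ℝ) :
    |Real.exp (-x) - 1 + x| ≤ x ^ 2 * Real.exp |x| := by
  rcases le_total 0 x with hx | hx
  · rw [abs_of_nonneg (exp_num_nonneg x), abs_of_nonneg hx]
    have h4 : (1:ℝ) ≤ Real.exp x := by
      rw [show (1:ℝ) = Real.exp 0 by simp]; exact Real.exp_le_exp.2 hx
    nlinarith [exp_quad_bound x hx, sq_nonneg x]
  · rw [abs_of_nonneg (exp_num_nonneg x), abs_of_nonpos hx]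
    set t := -x with ht
    have ht0 : 0 ≤ t := by simp [ht]; linarith
    have := exp_quad_bound' t ht0
    have hx2 : x ^ 2 = t ^ 2 := by simp [ht]
    calc Real.exp (-x) - 1 + x = Real.exp t - 1 - t := by rw [← ht]; ring
      _ ≤ t ^ 2 * Real.exp t := this
      _ = x ^ 2 * Real.exp (-x) := by rw [hx2]

section Series

variable {b : ℕ → ℝ} (hb0 : ∀ n, 0 < b n) (hb1 : ∀ n, b n ≤ (1/2) ^ n)

include hb1 in
lemma summable_b (hb0 : ∀ n, 0 < b n) : Summable b :=
  Summable.of_nonneg_of_le (fun n => (hb0 n).le) hb1 summable_geometric_two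

include hb0 hb1 in
lemma b_le_one (n : ℕ) : b n ≤ 1 :=
  (hb1 n).trans (pow_le_one₀ (by norm_num) (by norm_num))

include hb0 hb1 in
lemma psi_summable (r : ℝ) : Summable fun n => psiTerm (b n) r := by
  apply Summable.of_norm_bounded (g := fun n => b n * (|r| * Real.exp |r|))
    ((summable_b hb1 hb0).mul_right _)
  intro n
  have hb01 := hb0 n
  have hble1 := b_le_one hb0 hb1 n
  have h2 : |b n * r| = b n * |r| := by rw [abs_mul, abs_of_pos hb01]
  have h3 : Real.exp (b n * |r|) ≤ Real.exp |r| := by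
    apply Real.exp_le_exp.2; nlinarith [abs_nonneg r]
  calc ‖psiTerm (b n) r‖ = |1 - Real.exp (-(b n * r))| := rfl
    _ ≤ |b n * r| * Real.exp |b n * r| := abs_psiTerm_le _
    _ = b n * |r| * Real.exp (b n * |r|) := by rw [h2]
    _ ≤ b n * |r| * Real.exp |r| := by
        apply mul_le_mul_of_nonneg_left h3 (by positivity)
    _ = b n * (|r| * Real.exp |r|) := by ring

include hb0 hb1 in
lemma phi_summable (r : ℝ) : Summable fun n => phiTerm (b n) r := by
  apply Summable.of_norm_bounded (g := fun n => b n * (r ^ 2 * Real.exp |r|))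
    ((summable_b hb1 hb0).mul_right _)
  intro n
  have hb01 := hb0 n
  have hble1 := b_le_one hb0 hb1 n
  have h2 : |b n * r| = b n * |r| := by rw [abs_mul, abs_of_pos hb01]
  have h3 : Real.exp (b n * |r|) ≤ Real.exp |r| := by
    apply Real.exp_le_exp.2; nlinarith [abs_nonneg r]
  have h5 : |Real.exp (-(b n * r)) - 1 + b n * r| ≤ b n ^ 2 * (r ^ 2 * Real.exp |r|) := by
    calc |Real.exp (-(b n * r)) - 1 + b n * r| ≤ (b n * r) ^ 2 * Real.exp |b n * r| :=
          abs_phiNum_le _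
      _ = b n ^ 2 * r ^ 2 * Real.exp (b n * |r|) := by rw [h2]; ring
      _ ≤ b n ^ 2 * r ^ 2 * Real.exp |r| := by
          apply mul_le_mul_of_nonneg_left h3 (by positivity)
      _ = b n ^ 2 * (r ^ 2 * Real.exp |r|) := by ring
  have heq : ‖phiTerm (b n) r‖ = |Real.exp (-(b n * r)) - 1 + b n * r| / b n := by
    rw [phiTerm, Real.norm_eq_abs, abs_div, abs_of_pos hb01]
    congr 1
    ring_nf
  rw [heq]
  rw [div_le_iff₀ hb01]
  calc |Real.exp (-(b n * r)) - 1 + b n * r| ≤ b n ^ 2 * (r ^ 2 * Real.exp |r|) := h5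
    _ = b n * (r ^ 2 * Real.exp |r|) * b n := by ring

lemma psiTerm_nonneg {c : ℝ} (hc : 0 < c) {r : ℝ} (hr : 0 ≤ r) : 0 ≤ psiTerm c r := by
  have : Real.exp (-(c * r)) ≤ 1 := by
    rw [show (1:ℝ) = Real.exp 0 by simp]
    apply Real.exp_le_exp.2; nlinarith
  simp only [psiTerm]; linarith

lemma psiTerm_le_one (c r : ℝ) : psiTerm c r ≤ 1 := by
  have := Real.exp_pos (-(c * r)); simp only [psiTerm]; linarith

lemma phiTerm_nonneg {c : ℝ} (hc : 0 < c) (r : ℝ) : 0 ≤ phiTerm c r := by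
  apply div_nonneg _ hc.le
  nlinarith [exp_num_nonneg (c * r)]

lemma phiTerm_le_self {c : ℝ} (hc : 0 < c) {r : ℝ} (hr : 0 ≤ r) : phiTerm c r ≤ r := by
  rw [phiTerm, div_le_iff₀ hc]
  have : Real.exp (-(c * r)) ≤ 1 := by
    rw [show (1:ℝ) = Real.exp 0 by simp]
    apply Real.exp_le_exp.2; nlinarith
  nlinarith

lemma phiTerm_le_sq {c : ℝ} (hc : 0 < c) {r : ℝ} (hr : 0 ≤ r) : phiTerm c r ≤ c * r ^ 2 := by
  rw [phiTerm, div_le_iff₀ hc]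
  have h := exp_quad_bound (c * r) (by positivity)
  nlinarith

include hb0 hb1 in
lemma psi_nonneg {r : ℝ} (hr : 0 ≤ r) : 0 ≤ Psi b r :=
  tsum_nonneg fun n => psiTerm_nonneg (hb0 n) hr

lemma psi_zero : Psi b 0 = 0 := by
  simp [Psi, psiTerm]

lemma phi_zero : Phi b 0 = 0 := by
  simp [Phi, phiTerm]

include hb0 hb1 in
lemma phi_nonneg (r : ℝ) : 0 ≤ Phi b r :=
  tsum_nonneg fun n => phiTerm_nonneg (hb0 n) r

include hb0 hb1 in
lemma psi_pos {r : ℝ} (hr : 0 < r) : 0 < Psi b r := by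
  have h0 : 0 < psiTerm (b 0) r := by
    have : Real.exp (-(b 0 * r)) < 1 := by
      rw [show (1:ℝ) = Real.exp 0 by simp]
      apply Real.exp_lt_exp.2
      have := hb0 0; nlinarith
    simp only [psiTerm]; linarith
  have := Summable.le_tsum (psi_summable hb0 hb1 r) 0 (fun n _ => psiTerm_nonneg (hb0 n) hr.le)
  calc (0:ℝ) < psiTerm (b 0) r := h0
    _ ≤ Psi b r := this

include hb0 hb1 in
lemma psi_mono : Monotone (Psi b) := by
  intro x y hxy
  apply Summable.tsum_le_tsum _ (psi_summable hb0 hb1 x) (psi_summable hb0 hb1 y)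
  intro n
  simp only [psiTerm, sub_le_sub_iff_left]
  apply Real.exp_le_exp.2
  have := hb0 n; nlinarith


include hb0 hb1 in
lemma psi_concave : ConcaveOn ℝ (Set.Ici 0) (Psi b) := by
  constructor
  · exact convex_Ici 0
  · intro x _ y _ a c ha hc hac
    simp only [smul_eq_mul]
    have hterm : ∀ n, a * psiTerm (b n) x + c * psiTerm (b n) y ≤ psiTerm (b n) (a * x + c * y) := by
      intro n
      have hconv := convexOn_exp.2 (Set.mem_univ (-(b n * x))) (Set.mem_univ (-(b n * y))) ha hc hac
      simp only [smul_eq_mul] at hconv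
      have heq : a * -(b n * x) + c * -(b n * y) = -(b n * (a * x + c * y)) := by ring
      rw [heq] at hconv
      simp only [psiTerm]
      nlinarith
    have hsx := (psi_summable hb0 hb1 x).mul_left a
    have hsy := (psi_summable hb0 hb1 y).mul_left c
    calc a * Psi b x + c * Psi b y
        = (∑' n, a * psiTerm (b n) x) + ∑' n, c * psiTerm (b n) y := by
          rw [Psi, Psi, tsum_mul_left, tsum_mul_left]
      _ = ∑' n, (a * psiTerm (b n) x + c * psiTerm (b n) y) := (Summable.tsum_add hsx hsy).symm
      _ ≤ ∑' n, psiTerm (b n) (a * x + c * y) :=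
          Summable.tsum_le_tsum hterm (hsx.add hsy) (psi_summable hb0 hb1 _)
      _ = Psi b (a * x + c * y) := rfl

include hb0 hb1 in
lemma psi_tendsto : Tendsto (Psi b) atTop atTop := by
  rw [tendsto_atTop]
  intro M
  obtain ⟨N, hN⟩ := exists_nat_gt M
  -- partial sum over range N tends to N
  have hterm : ∀ n : ℕ, Tendsto (fun r => psiTerm (b n) r) atTop (𝓝 1) := by
    intro n
    have h1 : Tendsto (fun r : ℝ => b n * r) atTop atTop :=
      Tendsto.const_mul_atTop (hb0 n) tendsto_id
    have h2 : Tendsto (fun r : ℝ => -(b n * r)) atTop atBot :=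
      tendsto_neg_atBot_iff.2 h1
    have h3 : Tendsto (fun r : ℝ => Real.exp (-(b n * r))) atTop (𝓝 0) :=
      Real.tendsto_exp_atBot.comp h2
    have : Tendsto (fun r : ℝ => 1 - Real.exp (-(b n * r))) atTop (𝓝 (1 - 0)) :=
      tendsto_const_nhds.sub h3
    simpa [psiTerm] using this
  have hsum : Tendsto (fun r => ∑ n ∈ Finset.range N, psiTerm (b n) r) atTop
      (𝓝 (∑ n ∈ Finset.range N, (1:ℝ))) :=
    tendsto_finset_sum _ (fun n _ => hterm n)
  simp only [Finset.sum_const, Finset.card_range, nsmul_eq_mul, mul_one] at hsum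
  have hev : ∀ᶠ r in atTop, M ≤ ∑ n ∈ Finset.range N, psiTerm (b n) r :=
    hsum.eventually (eventually_ge_nhds hN)
  filter_upwards [hev, eventually_ge_atTop (0:ℝ)] with r hr hr0
  calc M ≤ ∑ n ∈ Finset.range N, psiTerm (b n) r := hr
    _ ≤ Psi b r := Summable.sum_le_tsum _ (fun n _ => psiTerm_nonneg (hb0 n) hr0)
        (psi_summable hb0 hb1 r)

include hb0 hb1 in
lemma phiTerm_hasDerivAt (n : ℕ) (y : ℝ) :
    HasDerivAt (fun z => phiTerm (b n) z) (psiTerm (b n) y) y := by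
  have hb01 := hb0 n
  have h1 : HasDerivAt (fun z : ℝ => b n * z) (b n) y := by
    simpa using (hasDerivAt_id y).const_mul (b n)
  have h2 : HasDerivAt (fun z : ℝ => -(b n * z)) (-(b n)) y := h1.neg
  have h3 : HasDerivAt (fun z : ℝ => Real.exp (-(b n * z)))
      (Real.exp (-(b n * y)) * -(b n)) y := h2.exp
  have h4 : HasDerivAt (fun z : ℝ => b n * z + Real.exp (-(b n * z)) - 1)
      (b n + Real.exp (-(b n * y)) * -(b n)) y := (h1.add h3).sub_const 1
  have h5 := h4.div_const (b n)
  refine HasDerivAt.congr_deriv h5 ?_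
  rw [psiTerm]
  field_simp
  ring

include hb0 hb1 in
lemma phi_hasDerivAt (r : ℝ) : HasDerivAt (Phi b) (Psi b r) r := by
  have hR : (0:ℝ) < |r| + 1 := by positivity
  apply hasDerivAt_tsum_of_isPreconnected
    (u := fun n => b n * ((|r| + 1) * Real.exp (|r| + 1)))
    (((summable_b hb1 hb0).mul_right _))
    (isOpen_Ioo (a := -(|r|+1)) (b := |r|+1))
    ((convex_Ioo _ _).isPreconnected)
    (fun n y _ => phiTerm_hasDerivAt hb0 hb1 n y)
    _ (Set.mem_Ioo.2 ⟨by linarith, hR⟩) _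
    (Set.mem_Ioo.2 ⟨by nlinarith [abs_nonneg r, neg_abs_le r], by nlinarith [le_abs_self r]⟩)
  · intro n y hy
    have hb01 := hb0 n
    have hble1 := b_le_one hb0 hb1 n
    obtain ⟨hy1, hy2⟩ := hy
    have hyabs : |y| ≤ |r| + 1 := abs_le.2 ⟨by linarith, by linarith⟩
    have h2 : |b n * y| = b n * |y| := by rw [abs_mul, abs_of_pos hb01]
    have h3 : Real.exp (b n * |y|) ≤ Real.exp (|r| + 1) := by
      apply Real.exp_le_exp.2; nlinarith [abs_nonneg y]
    calc ‖psiTerm (b n) y‖ ≤ |b n * y| * Real.exp |b n * y| := abs_psiTerm_le _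
      _ = b n * |y| * Real.exp (b n * |y|) := by rw [h2]
      _ ≤ b n * (|r| + 1) * Real.exp (|r| + 1) := by
          apply mul_le_mul (by nlinarith [abs_nonneg y]) h3 (Real.exp_pos _).le (by positivity)
      _ = b n * ((|r| + 1) * Real.exp (|r| + 1)) := by ring
  · apply Summable.congr (summable_zero)
    intro n
    simp [phiTerm]


include hb0 hb1 in
lemma phi_differentiable : Differentiable ℝ (Phi b) :=
  fun r => (phi_hasDerivAt hb0 hb1 r).differentiableAt

include hb0 hb1 in
lemma phi_deriv : deriv (Phi b) = Psi b :=
  funext fun r => (phi_hasDerivAt hb0 hb1 r).deriv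

include hb0 hb1 in
lemma phi_convex : ConvexOn ℝ (Set.Ici 0) (Phi b) := by
  apply MonotoneOn.convexOn_of_deriv (convex_Ici 0)
    (phi_differentiable hb0 hb1).continuous.continuousOn
    (phi_differentiable hb0 hb1).differentiableOn
  rw [phi_deriv hb0 hb1]
  exact (psi_mono hb0 hb1).monotoneOn _

include hb0 hb1 in
lemma phi_lower (x : ℝ) (hx : 0 ≤ x) : ∀ r, x ≤ r → Psi b x * (r - x) ≤ Phi b r := by
  intro r hr
  have hg : ∀ y, HasDerivAt (fun z => Phi b z - Psi b x * z) (Psi b y - Psi b x) y := by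
    intro y
    have h1 : HasDerivAt (fun z : ℝ => Psi b x * z) (Psi b x) y := by
      simpa using (hasDerivAt_id y).const_mul (Psi b x)
    exact (phi_hasDerivAt hb0 hb1 y).sub h1
  have hmono : MonotoneOn (fun z => Phi b z - Psi b x * z) (Set.Ici x) := by
    have hcont : Continuous (fun z => Phi b z - Psi b x * z) :=
      ((phi_differentiable hb0 hb1).continuous).sub (continuous_const.mul continuous_id)
    have hdiff : Differentiable ℝ (fun z => Phi b z - Psi b x * z) :=
      fun y => (hg y).differentiableAt
    have hderiv : deriv (fun z => Phi b z - Psi b x * z) = fun y => Psi b y - Psi b x :=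
      funext fun y => (hg y).deriv
    apply monotoneOn_of_deriv_nonneg (convex_Ici x) hcont.continuousOn
      hdiff.differentiableOn
    intro y hy
    rw [hderiv]
    rw [interior_Ici, Set.mem_Ioi] at hy
    have := psi_mono hb0 hb1 (le_of_lt hy)
    simp only
    linarith
  have hm := hmono Set.self_mem_Ici (show r ∈ Set.Ici x from hr) hr
  simp only at hm
  have hφx : 0 ≤ Phi b x := phi_nonneg hb0 hb1 x
  have hexp : Psi b x * (r - x) = Psi b x * r - Psi b x * x := by ring
  linarith

include hb0 hb1 in
lemma phi_div_tendsto : Tendsto (fun r => Phi b r / r) atTop atTop := by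
  rw [tendsto_atTop]
  intro M
  set M' := max M 0 + 1 with hM'
  have hM'0 : 0 < M' := by
    have := le_max_right M 0; simp only [hM']; linarith
  obtain ⟨x, hx0, hxψ⟩ : ∃ x, 0 ≤ x ∧ 2 * M' ≤ Psi b x := by
    have h := (tendsto_atTop.1 (psi_tendsto hb0 hb1)) (2 * M')
    obtain ⟨x, hx⟩ := (h.and (eventually_ge_atTop (0:ℝ))).exists
    exact ⟨x, hx.2, hx.1⟩
  have hψx0 : 0 ≤ Psi b x := psi_nonneg hb0 hb1 hx0
  filter_upwards [eventually_ge_atTop (max (2 * x) 1)] with r hr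
  have hr1 : 1 ≤ r := le_trans (le_max_right _ _) hr
  have hr2x : 2 * x ≤ r := le_trans (le_max_left _ _) hr
  have hrpos : 0 < r := by linarith
  have hlow := phi_lower hb0 hb1 x hx0 r (by linarith)
  have key : M' ≤ Phi b r / r := by
    rw [le_div_iff₀ hrpos]
    calc M' * r ≤ Psi b x * (r - x) := by nlinarith
      _ ≤ Phi b r := hlow
  have : M ≤ M' := by
    have := le_max_left M 0; simp only [hM']; linarith
  linarith

end Series

/-! ### Complex extension and analyticity -/

noncomputable def phiTermC (c : ℝ) (z : ℂ) : ℂ := ((c:ℂ) * z + Complex.exp (-((c:ℂ) * z)) - 1) / (c:ℂ)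

noncomputable def PhiC (b : ℕ → ℝ) (z : ℂ) : ℂ := ∑' n, phiTermC (b n) z

lemma phiTermC_norm_le {c : ℝ} (hc : 0 < c) (hc1 : c ≤ 1) {R : ℝ} (hR : 1 ≤ R) {z : ℂ}
    (hz : ‖z‖ ≤ R) :
    ‖phiTermC c z‖ ≤ if c * R ≤ 1 then c * R ^ 2 else (Real.exp R + 1 + R) / c := by
  have hnum : phiTermC c z = (Complex.exp (-((c:ℂ) * z)) - 1 - (-((c:ℂ) * z))) / (c:ℂ) := by
    rw [phiTermC]; ring_nf
  set w : ℂ := -((c:ℂ) * z) with hw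
  have hwnorm : ‖w‖ = c * ‖z‖ := by
    rw [hw, norm_neg, norm_mul, Complex.norm_real, Real.norm_eq_abs, abs_of_pos hc]
  have hnorm : ‖phiTermC c z‖ = ‖Complex.exp w - 1 - w‖ / c := by
    rw [hnum, norm_div, Complex.norm_real, Real.norm_eq_abs, abs_of_pos hc]
  rw [hnorm]
  split_ifs with h
  · -- small case : ‖w‖ ≤ 1
    have hw1 : ‖w‖ ≤ 1 := by
      rw [hwnorm]
      calc c * ‖z‖ ≤ c * R := by nlinarith [norm_nonneg z]
        _ ≤ 1 := h
    have hb := Complex.norm_exp_sub_one_sub_id_le (x := w) hw1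
    rw [div_le_iff₀ hc]
    calc ‖Complex.exp w - 1 - w‖ ≤ ‖w‖ ^ 2 := hb
      _ = c ^ 2 * ‖z‖ ^ 2 := by rw [hwnorm]; ring
      _ ≤ c ^ 2 * R ^ 2 := by
          have := pow_le_pow_left₀ (norm_nonneg z) hz 2
          nlinarith [sq_nonneg c]
      _ = c * R ^ 2 * c := by ring
  · -- crude case
    have hwR : ‖w‖ ≤ R := by
      rw [hwnorm]
      calc c * ‖z‖ ≤ 1 * R := by nlinarith [norm_nonneg z]
        _ = R := one_mul R
    have hexp : ‖Complex.exp w‖ ≤ Real.exp R := by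
      rw [Complex.norm_exp]
      apply Real.exp_le_exp.2
      calc w.re ≤ ‖w‖ := Complex.re_le_norm w
        _ = ‖w‖ := rfl
        _ ≤ R := hwR
    apply div_le_div_of_nonneg_right _ hc.le
    calc ‖Complex.exp w - 1 - w‖ ≤ ‖Complex.exp w - 1‖ + ‖w‖ := norm_sub_le _ _
      _ ≤ ‖Complex.exp w‖ + ‖(1:ℂ)‖ + ‖w‖ := by
          have := norm_sub_le (Complex.exp w) 1; linarith
      _ ≤ Real.exp R + 1 + R := by
          have h1 : ‖(1:ℂ)‖ = 1 := by simp
          rw [h1]; linarith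

section Analytic

variable {b : ℕ → ℝ} (hb0 : ∀ n, 0 < b n) (hb1 : ∀ n, b n ≤ (1/2) ^ n)

include hb0 hb1 in
set_option maxHeartbeats 1000000 in
lemma phiC_differentiable : Differentiable ℂ (PhiC b) := by
  rw [← differentiableOn_univ]
  have hpartial : ∀ s : Finset ℕ, DifferentiableOn ℂ
      (fun z => ∑ n ∈ s, phiTermC (b n) z) Set.univ := by
    intro s
    apply Differentiable.differentiableOn
    apply Differentiable.fun_sum
    intro n _
    have h1 : Differentiable ℂ fun z : ℂ => (b n : ℂ) * z := differentiable_id.const_mul _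
    exact ((h1.add (h1.neg.cexp)).sub_const 1).div_const _
  refine TendstoLocallyUniformlyOn.differentiableOn (φ := (atTop : Filter (Finset ℕ)))
    ?_ (Filter.Eventually.of_forall hpartial) isOpen_univ
  rw [tendstoLocallyUniformlyOn_iff_forall_isCompact isOpen_univ]
  intro K _ hK
  obtain ⟨R₀, hR₀⟩ := hK.isBounded.subset_closedBall 0
  set R := max R₀ 1 with hRdef
  have hR1 : 1 ≤ R := le_max_right _ _
  have hRpos : 0 < R := by linarith
  have hsub : K ⊆ Metric.closedBall 0 R :=
    hR₀.trans (Metric.closedBall_subset_closedBall (le_max_left _ _))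
  -- the summable bound
  have hNev : ∀ᶠ n in atTop, (1/2:ℝ) ^ n * R ≤ 1 := by
    have h0 : Tendsto (fun n : ℕ => (1/2:ℝ) ^ n * R) atTop (𝓝 (0 * R)) :=
      (tendsto_pow_atTop_nhds_zero_of_lt_one (by norm_num) (by norm_num)).mul_const R
    rw [zero_mul] at h0
    exact h0.eventually (eventually_le_nhds one_pos)
  obtain ⟨N, hN⟩ := eventually_atTop.1 hNev
  have hu : Summable (fun n => if b n * R ≤ 1 then b n * R ^ 2 else (Real.exp R + 1 + R) / b n) := by
    rw [← summable_nat_add_iff N]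
    have hgeom : Summable (fun n : ℕ => (1/2:ℝ) ^ (n + N) * R ^ 2) :=
      (summable_nat_add_iff N).2 (summable_geometric_two.mul_right _)
    apply Summable.of_nonneg_of_le _ _ hgeom
    · intro n
      split_ifs with h
      · have := hb0 (n + N); positivity
      · have := hb0 (n + N)
        have h2 : (0:ℝ) < Real.exp R + 1 + R := by positivity
        positivity
    · intro n
      have hcond : b (n + N) * R ≤ 1 := by
        calc b (n + N) * R ≤ (1/2) ^ (n + N) * R := by
              apply mul_le_mul_of_nonneg_right (hb1 _) hRpos.le
          _ ≤ 1 := hN (n + N) (by omega)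
      rw [if_pos hcond]
      apply mul_le_mul_of_nonneg_right (hb1 _) (by positivity)
  apply (tendstoUniformlyOn_tsum hu _).mono hsub
  intro n z hz
  rw [Metric.mem_closedBall, dist_zero_right] at hz
  exact phiTermC_norm_le (hb0 n) (b_le_one hb0 hb1 n) hR1 hz

include hb0 hb1 in
lemma phiC_real (r : ℝ) : PhiC b (r : ℂ) = ((Phi b r : ℝ) : ℂ) := by
  rw [PhiC, Phi, Complex.ofReal_tsum]
  apply tsum_congr
  intro n
  rw [phiTermC, phiTerm]
  push_cast
  ring_nf

include hb0 hb1 in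
lemma phi_contDiffOn : ContDiffOn ℝ (⊤ : ℕ∞) (Phi b) (Set.Ici 0) := by
  have hana : AnalyticOnNhd ℝ (Phi b) Set.univ := by
    intro x _
    have h1 : AnalyticAt ℝ (PhiC b) ((x : ℝ) : ℂ) :=
      ((phiC_differentiable hb0 hb1).analyticAt _).restrictScalars
    have h2 : AnalyticAt ℝ (fun r : ℝ => PhiC b (r : ℂ)) x :=
      h1.comp (Complex.ofRealCLM.analyticAt x)
    have h3 : AnalyticAt ℝ (fun r : ℝ => (PhiC b (r : ℂ)).re) x :=
      (Complex.reCLM.analyticAt _).comp h2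
    have heq : (fun r : ℝ => (PhiC b (r:ℂ)).re) = Phi b := by
      funext r; rw [phiC_real hb0 hb1 r, Complex.ofReal_re]
    rwa [heq] at h3
  exact (hana.contDiff).contDiffOn

end Analytic

/-! ### Measure-theoretic lemmas -/

section Measure

variable {Ω : Type*} [MeasurableSpace Ω] {μ : Measure Ω}

lemma setint_congr {f g : Ω → ℝ} (hfg : f =ᵐ[μ] g) (c : ℝ) :
    ∫ x in {y | c ≤ |f y|}, |f x| ∂μ = ∫ x in {y | c ≤ |g y|}, |g x| ∂μ := by
  have hset : {y | c ≤ |f y|} =ᵐ[μ] {y | c ≤ |g y|} := by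
    rw [Filter.eventuallyEq_set]
    filter_upwards [hfg] with x hx
    simp only [Set.mem_setOf_eq, hx]
  rw [Measure.restrict_congr_set hset]
  apply integral_congr_ae
  filter_upwards [ae_restrict_of_ae hfg] with x hx
  rw [hx]

lemma main_bound {b c : ℕ → ℝ} (hb0 : ∀ n, 0 < b n) (hb1 : ∀ n, b n ≤ (1/2) ^ n)
    (hbc : ∀ n, b n * c n = (1/2) ^ n)
    {f : Ω → ℝ} (hf : Integrable f μ) {C : ℝ} (hCf : ∫ x, |f x| ∂μ ≤ C)
    (key : ∀ n, ∫ x in {y | c n ≤ |f y|}, |f x| ∂μ ≤ (1/2) ^ n) :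
    Integrable (fun x => Phi b |f x|) μ ∧ ∫ x, Phi b |f x| ∂μ ≤ 2 * C + 2 := by
  have hC0 : 0 ≤ C := le_trans (integral_nonneg fun x => abs_nonneg _) hCf
  obtain ⟨g, hgsm, hfg⟩ : ∃ g, StronglyMeasurable g ∧ f =ᵐ[μ] g :=
    ⟨hf.1.mk f, hf.1.stronglyMeasurable_mk, hf.1.ae_eq_mk⟩
  have hg : Integrable g μ := hf.congr hfg
  have hgm : Measurable g := hgsm.measurable
  have hSmeas : ∀ n, MeasurableSet {y | c n ≤ |g y|} := fun n =>
    measurableSet_le measurable_const hgm.abs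
  have keyg : ∀ n, ∫ x in {y | c n ≤ |g y|}, |g x| ∂μ ≤ (1/2) ^ n := fun n =>
    (setint_congr hfg (c n)) ▸ key n
  have hCg : ∫ x, |g x| ∂μ ≤ C := by
    have heq : ∫ x, |g x| ∂μ = ∫ x, |f x| ∂μ :=
      integral_congr_ae (by filter_upwards [hfg] with x hx; rw [hx])
    linarith
  have hterm_le : ∀ n x, phiTerm (b n) |g x| ≤
      (1/2) ^ n * |g x| + Set.indicator {y | c n ≤ |g y|} (fun y => |g y|) x := by
    intro n x
    by_cases hx : x ∈ {y | c n ≤ |g y|}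
    · have h1 : phiTerm (b n) |g x| ≤ |g x| := phiTerm_le_self (hb0 n) (abs_nonneg _)
      have h2 : Set.indicator {y | c n ≤ |g y|} (fun y => |g y|) x = |g x| :=
        Set.indicator_of_mem hx _
      have h3 : 0 ≤ (1/2:ℝ) ^ n * |g x| := by positivity
      rw [h2]; linarith
    · have h2 : Set.indicator {y | c n ≤ |g y|} (fun y => |g y|) x = 0 :=
        Set.indicator_of_notMem hx _
      simp only [Set.mem_setOf_eq, not_le] at hx
      have h1 : phiTerm (b n) |g x| ≤ b n * |g x| ^ 2 := phiTerm_le_sq (hb0 n) (abs_nonneg _)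
      have h4 : b n * |g x| ^ 2 ≤ (1/2) ^ n * |g x| := by
        have h5 : b n * |g x| ≤ b n * c n := mul_le_mul_of_nonneg_left hx.le (hb0 n).le
        rw [hbc n] at h5
        nlinarith [abs_nonneg (g x)]
      rw [h2]; linarith
  have htermcont : ∀ n, Continuous (fun r : ℝ => phiTerm (b n) r) := by
    intro n
    unfold phiTerm
    exact (((continuous_const.mul continuous_id).add
      ((continuous_const.mul continuous_id).neg.rexp)).sub continuous_const).div_const _
  have htermmeas : ∀ n, Measurable (fun x => phiTerm (b n) |g x|) := fun n =>
    (htermcont n).measurable.comp hgm.abs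
  have hlin : ∫⁻ x, ENNReal.ofReal (Phi b |g x|) ∂μ ≤ ENNReal.ofReal (2 * C + 2) := by
    have step1 : ∀ x, ENNReal.ofReal (Phi b |g x|) =
        ∑' n, ENNReal.ofReal (phiTerm (b n) |g x|) := fun x =>
      ENNReal.ofReal_tsum_of_nonneg (fun n => phiTerm_nonneg (hb0 n) _)
        (phi_summable hb0 hb1 _)
    have hsingle : ∀ n, ∫⁻ x, ENNReal.ofReal (phiTerm (b n) |g x|) ∂μ ≤
        ENNReal.ofReal ((1/2) ^ n * (C + 1)) := by
      intro n
      have hptr : ∀ x, ENNReal.ofReal (phiTerm (b n) |g x|) ≤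
          ENNReal.ofReal ((1/2) ^ n * |g x|) +
            Set.indicator {y | c n ≤ |g y|} (fun y => ENNReal.ofReal |g y|) x := by
        intro x
        have e1 : ENNReal.ofReal (Set.indicator {y | c n ≤ |g y|} (fun y => |g y|) x) =
            Set.indicator {y | c n ≤ |g y|} (fun y => ENNReal.ofReal |g y|) x := by
          by_cases hx : x ∈ {y | c n ≤ |g y|}
          · rw [Set.indicator_of_mem hx, Set.indicator_of_mem hx]
          · rw [Set.indicator_of_notMem hx, Set.indicator_of_notMem hx, ENNReal.ofReal_zero]
        calc ENNReal.ofReal (phiTerm (b n) |g x|)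
            ≤ ENNReal.ofReal ((1/2) ^ n * |g x| +
                Set.indicator {y | c n ≤ |g y|} (fun y => |g y|) x) :=
              ENNReal.ofReal_le_ofReal (hterm_le n x)
          _ ≤ ENNReal.ofReal ((1/2) ^ n * |g x|) +
                ENNReal.ofReal (Set.indicator {y | c n ≤ |g y|} (fun y => |g y|) x) :=
              ENNReal.ofReal_add_le
          _ = _ := by rw [e1]
      have hpart1 : ∫⁻ x, ENNReal.ofReal ((1/2) ^ n * |g x|) ∂μ ≤
          ENNReal.ofReal ((1/2) ^ n * C) := by
        have heq : ∀ x, ENNReal.ofReal ((1/2) ^ n * |g x|) =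
            ENNReal.ofReal ((1/2:ℝ) ^ n) * ENNReal.ofReal |g x| := fun x =>
          ENNReal.ofReal_mul (by positivity)
        rw [lintegral_congr heq, lintegral_const_mul' _ _ ENNReal.ofReal_ne_top,
          ← ofReal_integral_eq_lintegral_ofReal hg.abs
            (Filter.Eventually.of_forall fun x => abs_nonneg _),
          ← ENNReal.ofReal_mul (by positivity)]
        exact ENNReal.ofReal_le_ofReal
          (mul_le_mul_of_nonneg_left hCg (by positivity))
      have hpart2 : ∫⁻ x, Set.indicator {y | c n ≤ |g y|} (fun y => ENNReal.ofReal |g y|) x ∂μ ≤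
          ENNReal.ofReal ((1/2) ^ n) := by
        rw [lintegral_indicator (hSmeas n),
          ← ofReal_integral_eq_lintegral_ofReal (hg.abs.integrableOn)
            (Filter.Eventually.of_forall fun x => abs_nonneg _)]
        exact ENNReal.ofReal_le_ofReal (keyg n)
      calc ∫⁻ x, ENNReal.ofReal (phiTerm (b n) |g x|) ∂μ
          ≤ ∫⁻ x, (ENNReal.ofReal ((1/2) ^ n * |g x|) +
              Set.indicator {y | c n ≤ |g y|} (fun y => ENNReal.ofReal |g y|) x) ∂μ :=
            lintegral_mono hptr
        _ = ∫⁻ x, ENNReal.ofReal ((1/2) ^ n * |g x|) ∂μ +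
              ∫⁻ x, Set.indicator {y | c n ≤ |g y|} (fun y => ENNReal.ofReal |g y|) x ∂μ :=
            lintegral_add_left ((measurable_const.mul hgm.abs).ennreal_ofReal) _
        _ ≤ ENNReal.ofReal ((1/2) ^ n * C) + ENNReal.ofReal ((1/2) ^ n) :=
            add_le_add hpart1 hpart2
        _ ≤ ENNReal.ofReal ((1/2) ^ n * (C + 1)) := by
            rw [← ENNReal.ofReal_add (by positivity) (by positivity)]
            exact ENNReal.ofReal_le_ofReal (le_of_eq (by ring))
    calc ∫⁻ x, ENNReal.ofReal (Phi b |g x|) ∂μ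
        = ∫⁻ x, ∑' n, ENNReal.ofReal (phiTerm (b n) |g x|) ∂μ := lintegral_congr step1
      _ = ∑' n, ∫⁻ x, ENNReal.ofReal (phiTerm (b n) |g x|) ∂μ :=
          lintegral_tsum fun n => ((htermmeas n).ennreal_ofReal).aemeasurable
      _ ≤ ∑' n, ENNReal.ofReal ((1/2) ^ n * (C + 1)) := ENNReal.tsum_le_tsum hsingle
      _ = ENNReal.ofReal (∑' n, (1/2) ^ n * (C + 1)) :=
          (ENNReal.ofReal_tsum_of_nonneg (fun n => by positivity)
            (summable_geometric_two.mul_right _)).symm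
      _ = ENNReal.ofReal (2 * C + 2) := by
          rw [tsum_mul_right, tsum_geometric_two]
          ring_nf
  have hphig_meas : Measurable (fun x => Phi b |g x|) :=
    ((phi_differentiable hb0 hb1).continuous.measurable).comp hgm.abs
  have hnonneg : ∀ x, 0 ≤ Phi b |g x| := fun x => phi_nonneg hb0 hb1 _
  have hfin : HasFiniteIntegral (fun x => Phi b |g x|) μ := by
    rw [hasFiniteIntegral_def]
    have heq : ∀ x, ‖Phi b |g x|‖ₑ = ENNReal.ofReal (Phi b |g x|) := by
      intro x
      rw [← ofReal_norm, Real.norm_eq_abs, abs_of_nonneg (hnonneg x)]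
    rw [lintegral_congr heq]
    exact lt_of_le_of_lt hlin ENNReal.ofReal_lt_top
  have hint_g : Integrable (fun x => Phi b |g x|) μ := ⟨hphig_meas.aestronglyMeasurable, hfin⟩
  have hae2 : (fun x => Phi b |f x|) =ᵐ[μ] (fun x => Phi b |g x|) := by
    filter_upwards [hfg] with x hx; rw [hx]
  refine ⟨hint_g.congr hae2.symm, ?_⟩
  rw [integral_congr_ae hae2,
    integral_eq_lintegral_of_nonneg_ae (Filter.Eventually.of_forall hnonneg)
      hphig_meas.aestronglyMeasurable]
  calc (∫⁻ x, ENNReal.ofReal (Phi b |g x|) ∂μ).toReal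
      ≤ (ENNReal.ofReal (2 * C + 2)).toReal :=
        ENNReal.toReal_mono ENNReal.ofReal_ne_top hlin
    _ = 2 * C + 2 := ENNReal.toReal_ofReal (by linarith)


lemma reverse_aux {ℱ : Set (Ω → ℝ)} (hint : ∀ f ∈ ℱ, Integrable f μ)
    {Φ Φ' : ℝ → ℝ} (hsm : ContDiffOn ℝ (⊤ : ℕ∞) Φ (Set.Ici 0))
    (hderiv : ∀ r ∈ Set.Ici (0:ℝ), HasDerivWithinAt Φ (Φ' r) (Set.Ici 0) r)
    (hΦ0 : Φ 0 = 0) (hpos : ∀ r : ℝ, 0 < r → 0 < Φ' r)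
    (hsup : Tendsto (fun r => Φ r / r) atTop atTop)
    {C' : ℝ} (hbound : ∀ f ∈ ℱ,
      Integrable (fun x => Φ |f x|) μ ∧ ∫ x, Φ |f x| ∂μ ≤ C') :
    Tendsto (fun c : ℝ => sSup {m : ℝ | ∃ f ∈ ℱ, m = ∫ x in {y | c ≤ |f y|}, |f x| ∂μ})
      atTop (𝓝 0) := by
  have hmono : MonotoneOn Φ (Set.Ici 0) := by
    apply monotoneOn_of_deriv_nonneg (convex_Ici 0) hsm.continuousOn
    · intro x hx
      rw [interior_Ici, Set.mem_Ioi] at hx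
      exact ((hderiv x hx.le).differentiableWithinAt).mono interior_subset
    · intro x hx
      rw [interior_Ici, Set.mem_Ioi] at hx
      have h := (hderiv x hx.le).hasDerivAt (Ici_mem_nhds hx)
      rw [h.deriv]
      exact (hpos x hx).le
  have hΦnn : ∀ t : ℝ, 0 ≤ t → 0 ≤ Φ t := by
    intro t ht
    have := hmono Set.self_mem_Ici ht ht
    rw [hΦ0] at this
    exact this
  rw [Metric.tendsto_atTop]
  intro ε hε
  set K := (|C'| + 1) * (2 / ε) with hK
  have hC'1 : (0:ℝ) < |C'| + 1 := by positivity
  have hK0 : 0 < K := by positivity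
  obtain ⟨R₀, hR₀⟩ := eventually_atTop.1 (tendsto_atTop.1 hsup K)
  refine ⟨max R₀ 1, fun c hc => ?_⟩
  have hc1 : 1 ≤ c := le_trans (le_max_right _ _) hc
  have hcR : R₀ ≤ c := le_trans (le_max_left _ _) hc
  set S := {m : ℝ | ∃ f ∈ ℱ, m = ∫ x in {y | c ≤ |f y|}, |f x| ∂μ} with hSdef
  have hub : ∀ m ∈ S, m ≤ ε / 2 := by
    rintro m ⟨f, hf, rfl⟩
    obtain ⟨g, hgsm, hfg⟩ : ∃ g, StronglyMeasurable g ∧ f =ᵐ[μ] g :=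
      ⟨(hint f hf).1.mk f, (hint f hf).1.stronglyMeasurable_mk, (hint f hf).1.ae_eq_mk⟩
    have hg : Integrable g μ := (hint f hf).congr hfg
    have hgm : Measurable g := hgsm.measurable
    have hSm : MeasurableSet {y | c ≤ |g y|} := measurableSet_le measurable_const hgm.abs
    have hmeq : ∫ x in {y | c ≤ |f y|}, |f x| ∂μ = ∫ x in {y | c ≤ |g y|}, |g x| ∂μ :=
      setint_congr hfg c
    have hΦae : (fun x => Φ |f x|) =ᵐ[μ] fun x => Φ |g x| := by
      filter_upwards [hfg] with x hx; rw [hx]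
    have hΦint : Integrable (fun x => Φ |g x|) μ := (hbound f hf).1.congr hΦae
    have hΦle : ∫ x, Φ |g x| ∂μ ≤ C' := by
      rw [← integral_congr_ae hΦae]
      exact (hbound f hf).2
    have hptw : ∀ x, Set.indicator {y | c ≤ |g y|} (fun y => |g y|) x ≤ K⁻¹ * Φ |g x| := by
      intro x
      by_cases hx : x ∈ {y | c ≤ |g y|}
      · rw [Set.indicator_of_mem hx]
        have hgx : c ≤ |g x| := hx
        have hgx0 : 0 < |g x| := by linarith
        have hKle : K ≤ Φ |g x| / |g x| := hR₀ (|g x|) (le_trans hcR hgx)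
        rw [le_div_iff₀ hgx0] at hKle
        calc |g x| = K⁻¹ * (K * |g x|) := by field_simp
          _ ≤ K⁻¹ * Φ |g x| := mul_le_mul_of_nonneg_left hKle (by positivity)
      · rw [Set.indicator_of_notMem hx]
        have := hΦnn (|g x|) (abs_nonneg _)
        positivity
    have hind_int : Integrable (Set.indicator {y | c ≤ |g y|} fun y => |g y|) μ :=
      hg.abs.indicator hSm
    calc ∫ x in {y | c ≤ |f y|}, |f x| ∂μ
        = ∫ x in {y | c ≤ |g y|}, |g x| ∂μ := hmeq
      _ = ∫ x, Set.indicator {y | c ≤ |g y|} (fun y => |g y|) x ∂μ :=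
          (integral_indicator hSm).symm
      _ ≤ ∫ x, K⁻¹ * Φ |g x| ∂μ := integral_mono hind_int (hΦint.const_mul _) hptw
      _ = K⁻¹ * ∫ x, Φ |g x| ∂μ := integral_const_mul _ _
      _ ≤ K⁻¹ * (|C'| + 1) := by
          apply mul_le_mul_of_nonneg_left _ (by positivity)
          calc ∫ x, Φ |g x| ∂μ ≤ C' := hΦle
            _ ≤ |C'| := le_abs_self _
            _ ≤ |C'| + 1 := by linarith
      _ = ε / 2 := by
          rw [hK]
          field_simp
  rcases Set.eq_empty_or_nonempty S with hS | hS
  · rw [show sSup S = 0 by rw [hS]; exact Real.sSup_empty]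
    simpa [Real.dist_eq] using hε
  · obtain ⟨m₀, hm₀⟩ := hS
    have hm₀0 : 0 ≤ m₀ := by
      obtain ⟨f, hf, rfl⟩ := hm₀
      exact integral_nonneg fun x => abs_nonneg _
    have h1 : m₀ ≤ sSup S := le_csSup ⟨ε / 2, hub⟩ hm₀
    have h2 : sSup S ≤ ε / 2 := csSup_le ⟨m₀, hm₀⟩ hub
    rw [Real.dist_eq, sub_zero, abs_lt]
    constructor <;> linarith

end Measure
end DLVP

/-- **refined de la Vallée Poussin theorem.** Let `(Ω, 𝔅, μ)` be a σ-finite measure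
space and `ℱ ⊆ L¹(Ω, μ)`. Then `ℱ` is uniformly integrable if and only if `ℱ` is bounded in
`L¹(Ω, μ)` and there is a convex function `Φ ∈ C^∞([0,∞))` with `Φ(0) = Φ'(0) = 0`, `Φ'` concave,
`Φ'(r) > 0` for `r > 0`, `Φ(r)/r → ∞` and `Φ'(r) → ∞` as `r → ∞`, and
`sup_{f ∈ ℱ} ∫_Ω Φ(|f|) dμ < ∞`. -/
theorem de_la_vallee_poussin
    {Ω : Type*} [MeasurableSpace Ω] (μ : Measure Ω) [SigmaFinite μ]
    (ℱ : Set (Ω → ℝ)) (hint : ∀ f ∈ ℱ, Integrable f μ) :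
    ((∃ C : ℝ, ∀ f ∈ ℱ, ∫ x, |f x| ∂μ ≤ C) ∧
      Tendsto
        (fun c : ℝ => sSup {m : ℝ | ∃ f ∈ ℱ, m = ∫ x in {y | c ≤ |f y|}, |f x| ∂μ})
        atTop (𝓝 0))
    ↔ ((∃ C : ℝ, ∀ f ∈ ℱ, ∫ x, |f x| ∂μ ≤ C) ∧
      ∃ Φ Φ' : ℝ → ℝ,
        ContDiffOn ℝ (⊤ : ℕ∞) Φ (Set.Ici 0) ∧
        ConvexOn ℝ (Set.Ici 0) Φ ∧
        (∀ r ∈ Set.Ici (0:ℝ), HasDerivWithinAt Φ (Φ' r) (Set.Ici 0) r) ∧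
        ConcaveOn ℝ (Set.Ici 0) Φ' ∧
        Φ 0 = 0 ∧ Φ' 0 = 0 ∧
        (∀ r : ℝ, 0 < r → 0 < Φ' r) ∧
        Tendsto (fun r => Φ r / r) atTop atTop ∧
        Tendsto Φ' atTop atTop ∧
        ∃ C' : ℝ, ∀ f ∈ ℱ,
          Integrable (fun x => Φ |f x|) μ ∧ ∫ x, Φ |f x| ∂μ ≤ C') := by
  constructor
  · rintro ⟨⟨C, hC⟩, hT⟩
    refine ⟨⟨C, hC⟩, ?_⟩
    -- choose the thresholds from uniform integrability
    have hchoice : ∀ n : ℕ, ∃ D : ℝ, ∀ c : ℝ, c ≥ D →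
        |sSup {m : ℝ | ∃ f ∈ ℱ, m = ∫ x in {y | c ≤ |f y|}, |f x| ∂μ}| < (1/2) ^ n := by
      intro n
      have hε : (0:ℝ) < (1/2) ^ n := by positivity
      obtain ⟨D, hD⟩ := (Metric.tendsto_atTop.1 hT) ((1/2) ^ n) hε
      exact ⟨D, fun c hc => by simpa [Real.dist_eq] using hD c hc⟩
    choose D hD using hchoice
    set c : ℕ → ℝ := fun n => max (D n) 1 with hcdef
    have hc1 : ∀ n, (1:ℝ) ≤ c n := fun n => le_max_right _ _
    have hc0 : ∀ n, (0:ℝ) < c n := fun n => lt_of_lt_of_le one_pos (hc1 n)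
    set b : ℕ → ℝ := fun n => (1/2) ^ n / c n with hbdef
    have hb0 : ∀ n, 0 < b n := fun n => div_pos (by positivity) (hc0 n)
    have hb1 : ∀ n, b n ≤ (1/2) ^ n := fun n => div_le_self (by positivity) (hc1 n)
    have hbc : ∀ n, b n * c n = (1/2) ^ n := fun n => div_mul_cancel₀ _ (hc0 n).ne'
    have key : ∀ f ∈ ℱ, ∀ n, ∫ x in {y | c n ≤ |f y|}, |f x| ∂μ ≤ (1/2) ^ n := by
      intro f hf n
      have hub : ∀ m' ∈ {m : ℝ | ∃ f ∈ ℱ, m = ∫ x in {y | c n ≤ |f y|}, |f x| ∂μ}, m' ≤ C := by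
        rintro m' ⟨f', hf', rfl⟩
        calc ∫ x in {y | c n ≤ |f' y|}, |f' x| ∂μ ≤ ∫ x, |f' x| ∂μ :=
              setIntegral_le_integral (hint f' hf').abs
                (Filter.Eventually.of_forall fun x => abs_nonneg _)
          _ ≤ C := hC f' hf'
      have hmem : (∫ x in {y | c n ≤ |f y|}, |f x| ∂μ) ∈
          {m : ℝ | ∃ f ∈ ℱ, m = ∫ x in {y | c n ≤ |f y|}, |f x| ∂μ} := ⟨f, hf, rfl⟩
      have h1 := le_csSup ⟨C, hub⟩ hmem
      have h2 := hD n (c n) (le_max_left _ _)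
      calc ∫ x in {y | c n ≤ |f y|}, |f x| ∂μ
          ≤ sSup {m : ℝ | ∃ f ∈ ℱ, m = ∫ x in {y | c n ≤ |f y|}, |f x| ∂μ} := h1
        _ ≤ |sSup {m : ℝ | ∃ f ∈ ℱ, m = ∫ x in {y | c n ≤ |f y|}, |f x| ∂μ}| := le_abs_self _
        _ ≤ (1/2) ^ n := h2.le
    refine ⟨DLVP.Phi b, DLVP.Psi b,
      DLVP.phi_contDiffOn hb0 hb1,
      DLVP.phi_convex hb0 hb1,
      fun r _ => (DLVP.phi_hasDerivAt hb0 hb1 r).hasDerivWithinAt,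
      DLVP.psi_concave hb0 hb1,
      DLVP.phi_zero,
      DLVP.psi_zero,
      fun r hr => DLVP.psi_pos hb0 hb1 hr,
      DLVP.phi_div_tendsto hb0 hb1,
      DLVP.psi_tendsto hb0 hb1,
      2 * C + 2, ?_⟩
    intro f hf
    exact DLVP.main_bound hb0 hb1 hbc (hint f hf) (hC f hf) (key f hf)
  · rintro ⟨⟨C, hC⟩, Φ, Φ', hsm, _hconv, hderiv, _hconc, hΦ0, _hΦ'0, hpos, hsup, _hsup', C', hbound⟩
    exact ⟨⟨C, hC⟩, DLVP.reverse_aux hint hsm hderiv hΦ0 hpos hsup hbound⟩
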